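/- arXiv:math/0608716 — 3 statements merged into one kernel-verified Lean document; each statement's English description precedes it below -/
import Mathlib

section
/- Let k ≥ 1 and N ≥ 1 be integers, let V ⊆ ℝ^N be a nonempty bounded open connected set, and for each e ∈ {0,…,k} let S_e ⊆ ∂V be a nonempty set, the sets S_e being pairwise disjoint. Let φ_e : ℝ^N → ℝ (e ∈ {0,…,k}) be continuously differentiable on an open neighborhood of the closure of V, with φ_e ≥ 0 on the closure of V, ∑_{e=0}^k φ_e = 1 on the closure of V, and φ_e = 1 on S_e for every e. Define the real (k+1)×(k+1) matrices A_{l,m} := ∫_V ⟨∇φ_l(x), ∇φ_m(x)⟩ dx and B_{l,m} := ∫_V φ_l(x)·φ_m(x) dx. Then A is positive semidefinite, B is positive definite, and there exist constants α_A > 0 and α_B > 0 such that for every f ∈ ℂ^{k+1}: (1/α_A)·|f⌞1⃗|² ≤ ∑_{l,m} A_{l,m}·f_l·conj(f_m) ≤ α_A·|f⌞1⃗|², and (1/α_B)·|f|² ≤ ∑_{l,m} B_{l,m}·f_l·conj(f_m) ≤ α_B·|f|². -/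
/-!
For `f ∈ ℂ^{k+1}` the mass form is `∫_V |∑ₑ fₑ φₑ|²` and the stiffness form is
`∫_V |∇ ∑ₑ fₑ φₑ|²`. At a point of `S_e` the partition of unity is `δ_e`, so `∑ₑ fₑ φₑ` takes
the value `f_e` there. Hence a vanishing mass form forces `f = 0`, while a vanishing stiffness form
makes `∑ₑ fₑ φₑ` constant on the connected set `V`, i.e. all `fₑ` equal. Since `∑ₑ φₑ = 1`, the
stiffness form only sees `f⌞1⃗`. Both forms are continuous and homogeneous of degree two, so their
positivity on the compact unit sphere of the relevant subspace gives the two-sided constants.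
-/

open MeasureTheory Set

/-- The component of `f ∈ ℂ^{k+1}` orthogonal to `1⃗ = (k+1)^{-1/2}(1,…,1)`:
`f⌞1⃗ = f − ⟨f,1⃗⟩·1⃗`, i.e. `(f⌞1⃗)_i = f_i − (∑_j f_j)/(k+1)`. -/
noncomputable def perpOne {m : ℕ} (f : Fin m → ℂ) : Fin m → ℂ :=
  fun i => f i - (∑ j, f j) / (m : ℂ)

/-- The (real) value of the Hermitian quadratic form `∑_{l,m} M_{l,m}·f_l·conj(f_m)`
associated with a real matrix `M`. -/
noncomputable def quadFormC {m : ℕ} (M : Fin m → Fin m → ℝ) (f : Fin m → ℂ) : ℝ :=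
  (∑ l, ∑ j, (M l j : ℂ) * f l * (starRingEnd ℂ) (f j)).re

/-- The Euclidean inner product `⟨∇φ(x), ∇φ'(x)⟩` of the gradients of two scalar functions
on `ℝ^N`. -/
noncomputable def gradDot (N : ℕ) (φ φ' : (Fin N → ℝ) → ℝ) (x : Fin N → ℝ) : ℝ :=
  ∑ i, fderiv ℝ φ x (Pi.single i 1) * fderiv ℝ φ' x (Pi.single i 1)

open Finset ComplexConjugate Matrix

section QuadForm

variable {n : ℕ}

theorem quadFormC_eq_sum (M : Fin n → Fin n → ℝ) (f : Fin n → ℂ) :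
    quadFormC M f = ∑ l, ∑ m, M l m * (f l * conj (f m)).re := by
  simp only [quadFormC, Complex.re_sum, mul_assoc, Complex.re_ofReal_mul]

theorem quadFormC_smul (M : Fin n → Fin n → ℝ) (t : ℝ) (f : Fin n → ℂ) :
    quadFormC M (t • f) = t ^ 2 * quadFormC M f := by
  simp only [quadFormC_eq_sum, mul_sum, Pi.smul_apply, Complex.real_smul, map_mul,
    Complex.conj_ofReal]
  refine sum_congr rfl fun l _ => sum_congr rfl fun m _ => ?_
  rw [show (t : ℂ) * f l * ((t : ℂ) * conj (f m)) = ((t ^ 2 : ℝ) : ℂ) * (f l * conj (f m)) by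
    push_cast; ring, Complex.re_ofReal_mul]
  ring

theorem continuous_quadFormC (M : Fin n → Fin n → ℝ) : Continuous (quadFormC M) := by
  unfold quadFormC
  fun_prop

theorem quadFormC_sum {ι : Type*} (s : Finset ι) (M : ι → Fin n → Fin n → ℝ)
    (f : Fin n → ℂ) :
    quadFormC (fun l m : Fin n => ∑ i ∈ s, M i l m) f = ∑ i ∈ s, quadFormC (M i) f := by
  simp_rw [quadFormC_eq_sum, sum_mul, sum_comm (s := s)]

theorem quadFormC_mul_self (w : Fin n → ℝ) (f : Fin n → ℂ) :
    quadFormC (fun l m => w l * w m) f = ‖∑ l, w l • f l‖ ^ 2 := by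
  rw [← Complex.ofReal_re (‖∑ l, w l • f l‖ ^ 2), Complex.ofReal_pow, ← Complex.mul_conj',
    map_sum, sum_mul_sum, quadFormC]
  congr 1
  refine sum_congr rfl fun l _ => sum_congr rfl fun m _ => ?_
  simp only [Complex.real_smul, map_mul, Complex.conj_ofReal]
  push_cast
  ring

theorem quadFormC_integral {X : Type*} [MeasurableSpace X] (μ : Measure X)
    (G : Fin n → Fin n → X → ℝ) (hG : ∀ l m, Integrable (G l m) μ) (f : Fin n → ℂ) :
    quadFormC (fun l m => ∫ x, G l m x ∂μ) f = ∫ x, quadFormC (fun l m => G l m x) f ∂μ := by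
  simp only [quadFormC_eq_sum]
  rw [integral_finsetSum _ fun l _ => integrable_finsetSum _ fun m _ => (hG l m).mul_const _]
  refine sum_congr rfl fun l _ => ?_
  rw [integral_finsetSum _ fun m _ => (hG l m).mul_const _]
  exact sum_congr rfl fun m _ => (integral_mul_const _ _).symm

theorem quadFormC_ofReal (M : Fin n → Fin n → ℝ) (x : Fin n → ℝ) :
    quadFormC M (fun i => (x i : ℂ)) = star x ⬝ᵥ (Matrix.of M *ᵥ x) := by
  simp only [quadFormC_eq_sum, ← Complex.ofReal_mul, Complex.conj_ofReal, Complex.ofReal_re,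
    star_trivial, dotProduct, Matrix.mulVec, Matrix.of_apply, mul_sum]
  exact sum_congr rfl fun l _ => sum_congr rfl fun m _ => by ring

theorem posSemidef_of_quadFormC_nonneg {M : Fin n → Fin n → ℝ} (hM : ∀ l m, M l m = M m l)
    (h : ∀ f, 0 ≤ quadFormC M f) : (Matrix.of M).PosSemidef :=
  Matrix.posSemidef_iff_dotProduct_mulVec.2
    ⟨Matrix.IsHermitian.ext fun l m => hM m l, fun x => quadFormC_ofReal M x ▸ h _⟩

theorem posDef_of_quadFormC_pos {M : Fin n → Fin n → ℝ} (hM : ∀ l m, M l m = M m l)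
    (h : ∀ f, f ≠ 0 → 0 < quadFormC M f) : (Matrix.of M).PosDef := by
  refine Matrix.posDef_iff_dotProduct_mulVec.2 ⟨Matrix.IsHermitian.ext fun l m => hM m l,
    fun x hx => quadFormC_ofReal M x ▸ h _ fun h0 => hx ?_⟩
  funext i
  simpa using congrFun h0 i

end QuadForm

section Homogeneous

variable {E : Type*} [NormedAddCommGroup E] [NormedSpace ℝ E] {K : Set E} {p q : E → ℝ}

theorem apply_zero_of_sq_homogeneous (hp : ∀ (t : ℝ) x, p (t • x) = t ^ 2 * p x) : p 0 = 0 := by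
  simpa using hp 0 0

theorem nonneg_of_sq_homogeneous (hp : ∀ (t : ℝ) x, p (t • x) = t ^ 2 * p x)
    (hp_pos : ∀ x ∈ K, x ≠ 0 → 0 < p x) {x : E} (hx : x ∈ K) : 0 ≤ p x := by
  rcases eq_or_ne x 0 with rfl | hx0
  · exact (apply_zero_of_sq_homogeneous hp).ge
  · exact (hp_pos x hx hx0).le

variable [FiniteDimensional ℝ E]

theorem exists_le_mul_of_sq_homogeneous (hK : IsClosed K) (hp : Continuous p)
    (hq : Continuous q) (hp_smul : ∀ (t : ℝ) x, p (t • x) = t ^ 2 * p x)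
    (hq_smul : ∀ (t : ℝ) x, q (t • x) = t ^ 2 * q x) (hp_pos : ∀ x ∈ K, x ≠ 0 → 0 < p x)
    (hK_smul : ∀ (t : ℝ), ∀ x ∈ K, t • x ∈ K) :
    ∃ C, ∀ x ∈ K, q x ≤ C * p x := by
  have hS : IsCompact (K ∩ Metric.sphere 0 1) := (isCompact_sphere 0 1).inter_left hK
  have hp_pos' : ∀ u ∈ K ∩ Metric.sphere 0 1, 0 < p u := fun u hu =>
    hp_pos u hu.1 (ne_zero_of_mem_unit_sphere ⟨u, hu.2⟩)
  obtain ⟨C, hC⟩ := hS.exists_bound_of_continuousOn (f := fun u => q u / p u)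
    (hq.continuousOn.div hp.continuousOn fun u hu => (hp_pos' u hu).ne')
  refine ⟨C, fun x hx => ?_⟩
  rcases eq_or_ne x 0 with rfl | hx0
  · simp [apply_zero_of_sq_homogeneous hp_smul, apply_zero_of_sq_homogeneous hq_smul]
  set u := ‖x‖⁻¹ • x
  have hu : u ∈ K ∩ Metric.sphere 0 1 :=
    ⟨hK_smul _ x hx, by simp [u, norm_smul, norm_ne_zero_iff.2 hx0]⟩
  have hqu : q u ≤ C * p u :=
    (div_le_iff₀ (hp_pos' u hu)).1 ((le_abs_self _).trans (hC u hu))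
  have hxu : x = ‖x‖ • u := by simp [u, smul_smul, norm_ne_zero_iff.2 hx0]
  rw [hxu, hp_smul, hq_smul, mul_left_comm]
  exact mul_le_mul_of_nonneg_left hqu (sq_nonneg _)

theorem exists_equiv_of_sq_homogeneous (hK : IsClosed K) (hp : Continuous p)
    (hq : Continuous q) (hp_smul : ∀ (t : ℝ) x, p (t • x) = t ^ 2 * p x)
    (hq_smul : ∀ (t : ℝ) x, q (t • x) = t ^ 2 * q x) (hp_pos : ∀ x ∈ K, x ≠ 0 → 0 < p x)
    (hq_pos : ∀ x ∈ K, x ≠ 0 → 0 < q x) (hK_smul : ∀ (t : ℝ), ∀ x ∈ K, t • x ∈ K) :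
    ∃ α > 0, ∀ x ∈ K, 1 / α * p x ≤ q x ∧ q x ≤ α * p x := by
  obtain ⟨C₁, hC₁⟩ := exists_le_mul_of_sq_homogeneous hK hp hq hp_smul hq_smul hp_pos hK_smul
  obtain ⟨C₂, hC₂⟩ := exists_le_mul_of_sq_homogeneous hK hq hp hq_smul hp_smul hq_pos hK_smul
  set α := max (max C₁ C₂) 1
  have hα : 0 < α := lt_max_of_lt_right one_pos
  refine ⟨α, hα, fun x hx => ⟨?_, ?_⟩⟩
  · rw [one_div_mul_eq_div, div_le_iff₀' hα]
    exact (hC₂ x hx).trans <| mul_le_mul_of_nonneg_right (by simp [α])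
      (nonneg_of_sq_homogeneous hq_smul hq_pos hx)
  · exact (hC₁ x hx).trans <| mul_le_mul_of_nonneg_right (by simp [α])
      (nonneg_of_sq_homogeneous hp_smul hp_pos hx)

end Homogeneous

theorem exists_equiv_quadFormC {n : ℕ} (M : Fin n → Fin n → ℝ) {K : Set (Fin n → ℂ)}
    (hK : IsClosed K) (hK_smul : ∀ (t : ℝ), ∀ f ∈ K, t • f ∈ K)
    (hM : ∀ f ∈ K, f ≠ 0 → 0 < quadFormC M f) :
    ∃ α > 0, ∀ f ∈ K, 1 / α * ∑ i, ‖f i‖ ^ 2 ≤ quadFormC M f ∧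
      quadFormC M f ≤ α * ∑ i, ‖f i‖ ^ 2 := by
  refine exists_equiv_of_sq_homogeneous hK (by fun_prop) (continuous_quadFormC M)
    (fun t f => ?_) (quadFormC_smul M) (fun f _ hf => ?_) hM hK_smul
  · simp only [Pi.smul_apply, norm_smul, mul_pow, mul_sum, Real.norm_eq_abs, sq_abs]
  · obtain ⟨i, hi⟩ := Function.ne_iff.1 hf
    exact sum_pos' (fun _ _ => sq_nonneg _) ⟨i, mem_univ i, by positivity⟩

theorem sum_perpOne {n : ℕ} [NeZero n] (f : Fin n → ℂ) : ∑ i, perpOne f i = 0 := by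
  simp [perpOne, sum_sub_distrib, mul_div_cancel₀ _ (NeZero.ne (n : ℂ))]

theorem eq_single_of_sum_eq_one {ι : Type*} [Fintype ι] [DecidableEq ι] {w : ι → ℝ}
    (hw : ∀ i, 0 ≤ w i) (hsum : ∑ i, w i = 1) {e : ι} (he : w e = 1) : w = Pi.single e 1 := by
  have hrest : ∑ i ∈ univ.erase e, w i = 0 := by
    linarith [add_sum_erase univ w (mem_univ e)]
  funext i
  rcases eq_or_ne i e with rfl | hi
  · simp [he]
  · simpa [hi] using (sum_eq_zero_iff_of_nonneg fun j _ => hw j).1 hrest i (by simp [hi])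

theorem eqOn_zero_of_setIntegral_eq_zero {X : Type*} [TopologicalSpace X] [MeasurableSpace X]
    [OpensMeasurableSpace X] {μ : Measure X} [μ.IsOpenPosMeasure] {V : Set X} {h : X → ℝ}
    (hV : IsOpen V) (hc : ContinuousOn h V) (hnn : ∀ x ∈ V, 0 ≤ h x) (hint : IntegrableOn h V μ)
    (hI : ∫ x in V, h x ∂μ = 0) : EqOn h 0 V :=
  Measure.eqOn_open_of_ae_eq
    ((setIntegral_eq_zero_iff_of_nonneg_ae (ae_restrict_of_forall_mem hV.measurableSet hnn)
      hint).1 hI) hV hc continuousOn_const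

theorem ContinuousLinearMap.eq_zero_of_apply_single {N : ℕ} {F : Type*} [NormedAddCommGroup F]
    [NormedSpace ℝ F] (L : (Fin N → ℝ) →L[ℝ] F) (h : ∀ i, L (Pi.single i 1) = 0) : L = 0 :=
  ContinuousLinearMap.coe_injective <| (Pi.basisFun ℝ (Fin N)).ext fun i => by simpa using h i

section PartitionOfUnity

variable {N n : ℕ} {V U : Set (Fin N → ℝ)} {φ : Fin n → (Fin N → ℝ) → ℝ}

noncomputable def weightedSum (φ : Fin n → (Fin N → ℝ) → ℝ) (f : Fin n → ℂ) (x : Fin N → ℝ) :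
    ℂ :=
  ∑ l, φ l x • f l

noncomputable def massMatrix (V : Set (Fin N → ℝ)) (φ : Fin n → (Fin N → ℝ) → ℝ) :
    Fin n → Fin n → ℝ :=
  fun l m => ∫ x in V, φ l x * φ m x

noncomputable def stiffnessMatrix (V : Set (Fin N → ℝ)) (φ : Fin n → (Fin N → ℝ) → ℝ) :
    Fin n → Fin n → ℝ :=
  fun l m => ∫ x in V, gradDot N (φ l) (φ m) x

theorem weightedSum_eq_of_apply_eq_single {x : Fin N → ℝ} {e : Fin n}
    (hx : (φ · x) = Pi.single e 1) (f : Fin n → ℂ) : weightedSum φ f x = f e := by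
  simp [weightedSum, funext_iff.1 hx, Pi.single_apply]

theorem weightedSum_perpOne {x : Fin N → ℝ} (hx : ∑ l, φ l x = 1) (f : Fin n → ℂ) :
    weightedSum φ (perpOne f) x = weightedSum φ f x - (∑ j, f j) / n := by
  simp only [weightedSum, perpOne, smul_sub, sum_sub_distrib, ← sum_smul, hx, one_smul]

theorem fderiv_weightedSum_apply {x : Fin N → ℝ} (hφ : ∀ l, DifferentiableAt ℝ (φ l) x)
    (f : Fin n → ℂ) (v : Fin N → ℝ) :
    fderiv ℝ (weightedSum φ f) x v = ∑ l, fderiv ℝ (φ l) x v • f l := by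
  have : weightedSum φ f = fun y => ∑ l, φ l y • f l := rfl
  rw [this, fderiv_fun_sum fun l _ => (hφ l).smul_const (f l), _root_.sum_apply]
  simp only [fderiv_smul_const (hφ _), ContinuousLinearMap.smulRight_apply]

theorem continuousOn_weightedSum {s : Set (Fin N → ℝ)} (hφ : ∀ l, ContinuousOn (φ l) s)
    (f : Fin n → ℂ) : ContinuousOn (weightedSum φ f) s := by
  unfold weightedSum
  fun_prop

theorem contDiffOn_weightedSum {s : Set (Fin N → ℝ)} (hφ : ∀ l, ContDiffOn ℝ 1 (φ l) s)
    (f : Fin n → ℂ) : ContDiffOn ℝ 1 (weightedSum φ f) s :=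
  ContDiffOn.sum fun l _ => (hφ l).smul contDiffOn_const

theorem integrableOn_of_continuousOn_closure (hV : Bornology.IsBounded V)
    {g : (Fin N → ℝ) → ℝ} (hg : ContinuousOn g (closure V)) : IntegrableOn g V :=
  (hg.integrableOn_compact hV.isCompact_closure).mono_set subset_closure

theorem massMatrix_symm (l m : Fin n) : massMatrix V φ l m = massMatrix V φ m l := by
  simp only [massMatrix, mul_comm]

theorem stiffnessMatrix_symm (l m : Fin n) :
    stiffnessMatrix V φ l m = stiffnessMatrix V φ m l := by
  simp only [stiffnessMatrix, gradDot, mul_comm]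

theorem quadFormC_massMatrix (hV : Bornology.IsBounded V)
    (hφ : ∀ l, ContinuousOn (φ l) (closure V)) (f : Fin n → ℂ) :
    quadFormC (massMatrix V φ) f = ∫ x in V, ‖weightedSum φ f x‖ ^ 2 := by
  unfold massMatrix
  rw [quadFormC_integral _ (fun l m x => φ l x * φ m x)
    fun l m => integrableOn_of_continuousOn_closure hV ((hφ l).mul (hφ m))]
  simp only [quadFormC_mul_self, weightedSum]

theorem quadFormC_gradDot {x : Fin N → ℝ} (hφ : ∀ l, DifferentiableAt ℝ (φ l) x)
    (f : Fin n → ℂ) :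
    quadFormC (fun l m => gradDot N (φ l) (φ m) x) f =
      ∑ i, ‖fderiv ℝ (weightedSum φ f) x (Pi.single i 1)‖ ^ 2 := by
  simp only [gradDot, quadFormC_sum, quadFormC_mul_self, fderiv_weightedSum_apply hφ]

theorem quadFormC_stiffnessMatrix (hV : IsOpen V) (hV_bdd : Bornology.IsBounded V)
    (hU : IsOpen U) (hVU : closure V ⊆ U) (hφ : ∀ l, ContDiffOn ℝ 1 (φ l) U) (f : Fin n → ℂ) :
    quadFormC (stiffnessMatrix V φ) f =
      ∫ x in V, ∑ i, ‖fderiv ℝ (weightedSum φ f) x (Pi.single i 1)‖ ^ 2 := by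
  have hDφ l : ContinuousOn (fderiv ℝ (φ l)) U := (hφ l).continuousOn_fderiv_of_isOpen hU le_rfl
  have hint l m : IntegrableOn (gradDot N (φ l) (φ m)) V :=
    integrableOn_of_continuousOn_closure hV_bdd <|
      ContinuousOn.mono (by unfold gradDot; fun_prop) hVU
  unfold stiffnessMatrix
  rw [quadFormC_integral _ _ hint]
  refine setIntegral_congr_fun hV.measurableSet fun x hx => quadFormC_gradDot (fun l => ?_) f
  exact ((hφ l).differentiableOn one_ne_zero).differentiableAt
    (hU.mem_nhds (hVU (subset_closure hx)))

theorem eq_of_eqOn_weightedSum {f : Fin n → ℂ}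
    (hcont : ContinuousOn (weightedSum φ f) (closure V))
    (hδ : ∀ e, ∃ x ∈ closure V, (φ · x) = Pi.single e 1) {c : ℂ}
    (hc : EqOn (weightedSum φ f) (fun _ => c) V) (e : Fin n) : f e = c := by
  obtain ⟨x, hx, hφx⟩ := hδ e
  rw [← weightedSum_eq_of_apply_eq_single hφx f]
  exact hc.of_subset_closure hcont continuousOn_const subset_closure le_rfl hx

theorem quadFormC_massMatrix_pos (hV : IsOpen V) (hV_bdd : Bornology.IsBounded V)
    (hφ : ∀ l, ContinuousOn (φ l) (closure V))
    (hδ : ∀ e, ∃ x ∈ closure V, (φ · x) = Pi.single e 1) {f : Fin n → ℂ} (hf : f ≠ 0) :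
    0 < quadFormC (massMatrix V φ) f := by
  rw [quadFormC_massMatrix hV_bdd hφ]
  have hcont := continuousOn_weightedSum hφ f
  refine (setIntegral_nonneg hV.measurableSet fun _ _ => sq_nonneg _).lt_of_ne' fun h0 => hf ?_
  have hzero := eqOn_zero_of_setIntegral_eq_zero hV ((hcont.mono subset_closure).norm.pow 2)
    (fun _ _ => sq_nonneg _) (integrableOn_of_continuousOn_closure hV_bdd (hcont.norm.pow 2)) h0
  funext e
  exact eq_of_eqOn_weightedSum hcont hδ (fun x hx => by simpa using hzero hx) e

theorem quadFormC_stiffnessMatrix_nonneg (hV : IsOpen V) (hV_bdd : Bornology.IsBounded V)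
    (hU : IsOpen U) (hVU : closure V ⊆ U) (hφ : ∀ l, ContDiffOn ℝ 1 (φ l) U) (f : Fin n → ℂ) :
    0 ≤ quadFormC (stiffnessMatrix V φ) f := by
  rw [quadFormC_stiffnessMatrix hV hV_bdd hU hVU hφ]
  exact setIntegral_nonneg hV.measurableSet fun _ _ => sum_nonneg fun _ _ => sq_nonneg _

theorem quadFormC_stiffnessMatrix_pos (hV : IsOpen V) (hV_conn : IsPreconnected V)
    (hV_bdd : Bornology.IsBounded V) (hU : IsOpen U) (hVU : closure V ⊆ U)
    (hφ : ∀ l, ContDiffOn ℝ 1 (φ l) U) (hδ : ∀ e, ∃ x ∈ closure V, (φ · x) = Pi.single e 1)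
    {f : Fin n → ℂ} (hf_sum : ∑ i, f i = 0) (hf : f ≠ 0) :
    0 < quadFormC (stiffnessMatrix V φ) f := by
  refine (quadFormC_stiffnessMatrix_nonneg hV hV_bdd hU hVU hφ f).lt_of_ne' fun h0 => hf ?_
  rw [quadFormC_stiffnessMatrix hV hV_bdd hU hVU hφ] at h0
  have hg : ContDiffOn ℝ 1 (weightedSum φ f) U := contDiffOn_weightedSum hφ f
  have hDg : ContinuousOn (fderiv ℝ (weightedSum φ f)) U :=
    hg.continuousOn_fderiv_of_isOpen hU le_rfl
  have hzero := eqOn_zero_of_setIntegral_eq_zero hV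
    (ContinuousOn.mono (by fun_prop) (subset_closure.trans hVU))
    (fun _ _ => sum_nonneg fun _ _ => sq_nonneg _)
    (integrableOn_of_continuousOn_closure hV_bdd (ContinuousOn.mono (by fun_prop) hVU)) h0
  have hderiv : EqOn (fderiv ℝ (weightedSum φ f)) 0 V := fun x hx =>
    ContinuousLinearMap.eq_zero_of_apply_single _ fun i => by
      simpa using (sum_eq_zero_iff_of_nonneg fun _ _ => sq_nonneg _).1 (hzero hx) i (mem_univ i)
  obtain ⟨c, hc⟩ := hV.exists_is_const_of_fderiv_eq_zero hV_conn
    ((hg.differentiableOn one_ne_zero).mono (subset_closure.trans hVU)) hderiv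
  have hfc := eq_of_eqOn_weightedSum (hg.continuousOn.mono hVU) hδ hc
  funext e
  have hnc : (n : ℂ) * c = 0 := by simpa [hfc] using hf_sum
  rw [hfc e, Pi.zero_apply]
  exact (mul_eq_zero.1 hnc).resolve_left (Nat.cast_ne_zero.2 e.pos.ne')

theorem quadFormC_stiffnessMatrix_perpOne (hV : IsOpen V) (hV_bdd : Bornology.IsBounded V)
    (hU : IsOpen U) (hVU : closure V ⊆ U) (hφ : ∀ l, ContDiffOn ℝ 1 (φ l) U)
    (hφ_sum : ∀ x ∈ V, ∑ l, φ l x = 1) (f : Fin n → ℂ) :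
    quadFormC (stiffnessMatrix V φ) (perpOne f) = quadFormC (stiffnessMatrix V φ) f := by
  simp only [quadFormC_stiffnessMatrix hV hV_bdd hU hVU hφ]
  refine setIntegral_congr_fun hV.measurableSet fun x hx => ?_
  have : weightedSum φ (perpOne f) =ᶠ[nhds x] fun y => weightedSum φ f y - (∑ j, f j) / n :=
    Filter.eventually_of_mem (hV.mem_nhds hx) fun y hy => weightedSum_perpOne (hφ_sum y hy) f
  simp only [this.fderiv_eq, fderiv_sub_const]

end PartitionOfUnity

theorem stmt10_general (k N : ℕ)
    (V : Set (Fin N → ℝ)) (hV_open : IsOpen V)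
    (hV_bdd : Bornology.IsBounded V) (hV_conn : IsConnected V)
    (S : Fin (k + 1) → Set (Fin N → ℝ))
    (hS_ne : ∀ e, (S e).Nonempty) (hS_sub : ∀ e, S e ⊆ frontier V)
    (φ : Fin (k + 1) → (Fin N → ℝ) → ℝ)
    (hφ_smooth : ∀ e, ∃ U : Set (Fin N → ℝ),
      IsOpen U ∧ closure V ⊆ U ∧ ContDiffOn ℝ 1 (φ e) U)
    (hφ_nonneg : ∀ e, ∀ x ∈ closure V, 0 ≤ φ e x)
    (hφ_sum : ∀ x ∈ closure V, ∑ e, φ e x = 1)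
    (hφ_face : ∀ e, ∀ x ∈ S e, φ e x = 1) :
    (Matrix.PosSemidef (Matrix.of fun l m : Fin (k + 1) =>
        ∫ x in V, gradDot N (φ l) (φ m) x)) ∧
    (Matrix.PosDef (Matrix.of fun l m : Fin (k + 1) =>
        ∫ x in V, φ l x * φ m x)) ∧
    (∃ αA : ℝ, 0 < αA ∧ ∀ f : Fin (k + 1) → ℂ,
      (1 / αA) * (∑ i, ‖perpOne f i‖ ^ 2) ≤
          quadFormC (fun l m => ∫ x in V, gradDot N (φ l) (φ m) x) f ∧
        quadFormC (fun l m => ∫ x in V, gradDot N (φ l) (φ m) x) f ≤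
          αA * (∑ i, ‖perpOne f i‖ ^ 2)) ∧
    (∃ αB : ℝ, 0 < αB ∧ ∀ f : Fin (k + 1) → ℂ,
      (1 / αB) * (∑ i, ‖f i‖ ^ 2) ≤
          quadFormC (fun l m => ∫ x in V, φ l x * φ m x) f ∧
        quadFormC (fun l m => ∫ x in V, φ l x * φ m x) f ≤
          αB * (∑ i, ‖f i‖ ^ 2)) := by
  choose U hU hVU hφU using hφ_smooth
  have hU₀ : IsOpen (⋂ e, U e) := isOpen_iInter_of_finite hU
  have hVU₀ : closure V ⊆ ⋂ e, U e := subset_iInter hVU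
  have hφ e : ContDiffOn ℝ 1 (φ e) (⋂ e, U e) := (hφU e).mono (iInter_subset U e)
  have hδ e : ∃ x ∈ closure V, (φ · x) = Pi.single e 1 := by
    obtain ⟨x, hx⟩ := hS_ne e
    have hxV := frontier_subset_closure (hS_sub e hx)
    exact ⟨x, hxV, eq_single_of_sum_eq_one (hφ_nonneg · x hxV) (hφ_sum x hxV) (hφ_face e x hx)⟩
  have hB_pos {f : Fin (k + 1) → ℂ} (hf : f ≠ 0) : 0 < quadFormC (massMatrix V φ) f :=
    quadFormC_massMatrix_pos hV_open hV_bdd (fun e => (hφ e).continuousOn.mono hVU₀) hδ hf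
  obtain ⟨αA, hαA, hA⟩ := exists_equiv_quadFormC (stiffnessMatrix V φ)
    (K := {f | ∑ i, f i = 0}) (isClosed_eq (by fun_prop) continuous_const)
    (fun t f (hf : ∑ i, f i = 0) => by simp [← mul_sum, hf]) fun f hf =>
      quadFormC_stiffnessMatrix_pos hV_open hV_conn.isPreconnected hV_bdd hU₀ hVU₀ hφ hδ hf
  obtain ⟨αB, hαB, hB⟩ := exists_equiv_quadFormC (massMatrix V φ) isClosed_univ
    (fun _ _ _ => trivial) fun f _ => hB_pos
  refine ⟨posSemidef_of_quadFormC_nonneg stiffnessMatrix_symm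
      (quadFormC_stiffnessMatrix_nonneg hV_open hV_bdd hU₀ hVU₀ hφ),
    posDef_of_quadFormC_pos massMatrix_symm fun _ => hB_pos,
    ⟨αA, hαA, fun f => ?_⟩, ⟨αB, hαB, fun f => hB f (mem_univ f)⟩⟩
  have h := hA (perpOne f) (sum_perpOne f)
  rw [quadFormC_stiffnessMatrix_perpOne hV_open hV_bdd hU₀ hVU₀ hφ
    (fun x hx => hφ_sum x (subset_closure hx))] at h
  exact h

/-- (Lemma 3.1, N-dimensional part.) For a `C¹` partition of unity `(φ_e)`
on a bounded open connected `V ⊆ ℝ^N` adapted to pairwise disjoint boundary faces `S_e`, the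
stiffness matrix `A_{l,m} = ∫_V ⟨∇φ_l, ∇φ_m⟩` is positive semidefinite with quadratic form
equivalent to `|f⌞1⃗|²`, and the mass matrix `B_{l,m} = ∫_V φ_l·φ_m` is positive definite
with quadratic form equivalent to `|f|²`. -/
theorem stmt10 (k N : ℕ) (hk : 1 ≤ k) (hN : 1 ≤ N)
    (V : Set (Fin N → ℝ)) (hV_ne : V.Nonempty) (hV_open : IsOpen V)
    (hV_bdd : Bornology.IsBounded V) (hV_conn : IsConnected V)
    (S : Fin (k + 1) → Set (Fin N → ℝ))
    (hS_ne : ∀ e, (S e).Nonempty) (hS_sub : ∀ e, S e ⊆ frontier V)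
    (hS_disj : ∀ e e', e ≠ e' → Disjoint (S e) (S e'))
    (φ : Fin (k + 1) → (Fin N → ℝ) → ℝ)
    (hφ_smooth : ∀ e, ∃ U : Set (Fin N → ℝ),
      IsOpen U ∧ closure V ⊆ U ∧ ContDiffOn ℝ 1 (φ e) U)
    (hφ_nonneg : ∀ e, ∀ x ∈ closure V, 0 ≤ φ e x)
    (hφ_sum : ∀ x ∈ closure V, ∑ e, φ e x = 1)
    (hφ_face : ∀ e, ∀ x ∈ S e, φ e x = 1) :
    (Matrix.PosSemidef (Matrix.of fun l m : Fin (k + 1) =>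
        ∫ x in V, gradDot N (φ l) (φ m) x)) ∧
    (Matrix.PosDef (Matrix.of fun l m : Fin (k + 1) =>
        ∫ x in V, φ l x * φ m x)) ∧
    (∃ αA : ℝ, 0 < αA ∧ ∀ f : Fin (k + 1) → ℂ,
      (1 / αA) * (∑ i, ‖perpOne f i‖ ^ 2) ≤
          quadFormC (fun l m => ∫ x in V, gradDot N (φ l) (φ m) x) f ∧
        quadFormC (fun l m => ∫ x in V, gradDot N (φ l) (φ m) x) f ≤
          αA * (∑ i, ‖perpOne f i‖ ^ 2)) ∧
    (∃ αB : ℝ, 0 < αB ∧ ∀ f : Fin (k + 1) → ℂ,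
      (1 / αB) * (∑ i, ‖f i‖ ^ 2) ≤
          quadFormC (fun l m => ∫ x in V, φ l x * φ m x) f ∧
        quadFormC (fun l m => ∫ x in V, φ l x * φ m x) f ≤
          αB * (∑ i, ‖f i‖ ^ 2)) :=
  stmt10_general k N V hV_open hV_bdd hV_conn S hS_ne hS_sub φ hφ_smooth hφ_nonneg hφ_sum hφ_face
end

section
/- Let H₀ and H₁ be complex Hilbert spaces, let D₀ ⊆ H₀ and D₁ ⊆ H₁ be linear subspaces, and let R₀ : D₀ \ {0} → ℝ and R₁ : D₁ \ {0} → ℝ. Let S be the restriction to D₁ of a continuous linear map H₁ → H₀, with S(D₁) ⊆ D₀, and let φ : ℝ → ℝ ∪ {+∞} be nondecreasing with x ↦ exp(−φ(x)) continuous, such that R₀(S u) ≤ φ(R₁(u)) for every u ∈ D₁ with S u ≠ 0. Fix an integer m ≥ 1 and assume that the min–max value λ_m(R₁) is finite and that there exists μ > λ_m(R₁) such that R₁(v) ≥ μ for every nonzero v ∈ D₁ with S v = 0. Then λ_m(R₀) ≤ φ(λ_m(R₁)) in the extended reals. -/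
open Set

/-- The `m`-th min–max value of a Rayleigh-quotient-like functional `R` on a linear
subspace `D`: the infimum over `m`-dimensional subspaces `V ≤ D` of the supremum of `R`
over the nonzero vectors of `V`, computed in the extended reals. -/
noncomputable def minMaxVal {H : Type*} [AddCommGroup H] [Module ℂ H]
    (D : Submodule ℂ H) (R : H → ℝ) (m : ℕ) : EReal :=
  ⨅ (V : Submodule ℂ H) (_ : V ≤ D) (_ : Module.finrank ℂ V = m),
    ⨆ (v : H) (_ : v ∈ V) (_ : v ≠ 0), (R v : EReal)

/-!
For every level `c` with `λ_m(R₁) < c ≤ μ` there is an `m`-dimensional `V ≤ D₁` on which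
`R₁ < c`; since `R₁ ≥ μ` on the kernel of `S`, the map `S` is injective on `V`, and `S V ≤ D₀`
is an `m`-dimensional test space with `R₀ ≤ φ c` on it. Hence `λ_m(R₀) ≤ φ c` for all
`c ∈ (λ_m(R₁), μ)`. Continuity of `exp (-φ)` makes `φ` continuous as an `EReal`-valued map,
and letting `c ↓ λ_m(R₁)` gives the claim.
-/

open Filter Topology

namespace EReal

lemma ite_top_exp_neg_toReal_eq {y : EReal} (hy : y ≠ ⊥) :
    (if y = ⊤ then (0 : ℝ) else Real.exp (-y.toReal)) = (EReal.exp (-y)).toReal := by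
  induction y with
  | bot => exact absurd rfl hy
  | coe r => simp [← EReal.coe_neg, (Real.exp_pos _).le]
  | top => simp

lemma continuous_of_continuous_ite_top_exp_neg {X : Type*} [TopologicalSpace X]
    {φ : X → EReal}
    (hφ_ne_bot : ∀ x, φ x ≠ ⊥)
    (hφ : Continuous fun x => if φ x = ⊤ then (0 : ℝ) else Real.exp (-(φ x).toReal)) :
    Continuous φ := by
  have hφ_eq : φ = fun x => -ENNReal.log (ENNReal.ofReal
      (if φ x = ⊤ then (0 : ℝ) else Real.exp (-(φ x).toReal))) := by
    funext x
    have hexp_ne_top : EReal.exp (-φ x) ≠ ⊤ := by simpa using hφ_ne_bot x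
    rw [ite_top_exp_neg_toReal_eq (hφ_ne_bot x), ENNReal.ofReal_toReal hexp_ne_top,
      EReal.log_exp, neg_neg]
  rw [hφ_eq]
  exact continuous_neg.comp (ENNReal.continuous_log.comp (ENNReal.continuous_ofReal.comp hφ))

end EReal

section MinMax

variable {H : Type*} [AddCommGroup H] [Module ℂ H] {D : Submodule ℂ H} {R : H → ℝ} {m : ℕ}

lemma minMaxVal_le_of_forall_le {V : Submodule ℂ H} (hVD : V ≤ D)
    (hV : Module.finrank ℂ V = m) {b : EReal} (hR : ∀ v ∈ V, v ≠ 0 → (R v : EReal) ≤ b) :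
    minMaxVal D R m ≤ b :=
  iInf₂_le_of_le V hVD <| iInf_le_of_le hV <| iSup₂_le fun v hv => iSup_le (hR v hv)

lemma exists_forall_lt_of_minMaxVal_lt {c : EReal} (hc : minMaxVal D R m < c) :
    ∃ V : Submodule ℂ H, V ≤ D ∧ Module.finrank ℂ V = m ∧
      ∀ v ∈ V, v ≠ 0 → (R v : EReal) < c := by
  simp only [minMaxVal, iInf_lt_iff] at hc
  obtain ⟨V, hVD, hV, hsup⟩ := hc
  refine ⟨V, hVD, hV, fun v hv hv0 => ?_⟩
  exact (le_iSup₂_of_le v hv <| le_iSup (fun _ => (R v : EReal)) hv0).trans_lt hsup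

end MinMax

theorem minMaxVal_le_of_minMaxVal_lt {H₀ H₁ : Type*} [AddCommGroup H₀] [Module ℂ H₀]
    [AddCommGroup H₁] [Module ℂ H₁] {D₀ : Submodule ℂ H₀} {D₁ : Submodule ℂ H₁}
    {R₀ : H₀ → ℝ} {R₁ : H₁ → ℝ} (S : H₁ →ₗ[ℂ] H₀) (hS : ∀ u ∈ D₁, S u ∈ D₀)
    {φ : ℝ → EReal} (hφ_mono : Monotone φ)
    (hRφ : ∀ u ∈ D₁, S u ≠ 0 → (R₀ (S u) : EReal) ≤ φ (R₁ u)) {m : ℕ} {c : ℝ}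
    (hc : minMaxVal D₁ R₁ m < c) (hker : ∀ v ∈ D₁, v ≠ 0 → S v = 0 → c ≤ R₁ v) :
    minMaxVal D₀ R₀ m ≤ φ c := by
  obtain ⟨V, hVD, hV, hRV⟩ := exists_forall_lt_of_minMaxVal_lt hc
  have hRV' : ∀ v ∈ V, v ≠ 0 → R₁ v < c := fun v hv hv0 =>
    EReal.coe_lt_coe_iff.mp (hRV v hv hv0)
  have hinj : Function.Injective (S ∘ₗ V.subtype) := by
    refine (injective_iff_map_eq_zero _).mpr fun ⟨v, hv⟩ hSv => Subtype.ext ?_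
    by_contra hv0
    exact (hker v (hVD hv) hv0 hSv).not_gt (hRV' v hv hv0)
  have hrange : LinearMap.range (S ∘ₗ V.subtype) = V.map S := by
    rw [LinearMap.range_comp, Submodule.range_subtype]
  refine minMaxVal_le_of_forall_le (V := V.map S) ?_ ?_ ?_
  · rintro _ ⟨v, hv, rfl⟩
    exact hS v (hVD hv)
  · rw [← hrange, LinearMap.finrank_range_of_inj hinj, hV]
  · rintro _ ⟨v, hv, rfl⟩ hSv
    have hv0 : v ≠ 0 := by rintro rfl; exact hSv (map_zero S)
    exact (hRφ v (hVD hv) hSv).trans (hφ_mono (hRV' v hv hv0).le)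

theorem stmt11_general {H₀ H₁ : Type*}
    [NormedAddCommGroup H₀] [InnerProductSpace ℂ H₀]
    [NormedAddCommGroup H₁] [InnerProductSpace ℂ H₁]
    (D₀ : Submodule ℂ H₀) (D₁ : Submodule ℂ H₁)
    (R₀ : H₀ → ℝ) (R₁ : H₁ → ℝ)
    (S : H₁ →L[ℂ] H₀) (hS : ∀ u ∈ D₁, S u ∈ D₀)
    (φ : ℝ → EReal) (hφ_mono : Monotone φ) (hφ_ne_bot : ∀ x, φ x ≠ ⊥)
    (hφ_cont : Continuous fun x : ℝ =>
      if φ x = ⊤ then (0 : ℝ) else Real.exp (-(φ x).toReal))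
    (hRφ : ∀ u ∈ D₁, S u ≠ 0 → (R₀ (S u) : EReal) ≤ φ (R₁ u))
    (m : ℕ)
    (hfin_top : minMaxVal D₁ R₁ m ≠ ⊤) (hfin_bot : minMaxVal D₁ R₁ m ≠ ⊥)
    (μ : ℝ) (hμ : minMaxVal D₁ R₁ m < (μ : EReal))
    (hker : ∀ v ∈ D₁, v ≠ 0 → S v = 0 → μ ≤ R₁ v) :
    minMaxVal D₀ R₀ m ≤ φ ((minMaxVal D₁ R₁ m).toReal) := by
  set x := (minMaxVal D₁ R₁ m).toReal
  have hx : minMaxVal D₁ R₁ m = x := (EReal.coe_toReal hfin_top hfin_bot).symm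
  have hxμ : x < μ := EReal.coe_lt_coe_iff.mp (hx ▸ hμ)
  have hφ_tendsto : Tendsto φ (𝓝[>] x) (𝓝 (φ x)) :=
    ((EReal.continuous_of_continuous_ite_top_exp_neg hφ_ne_bot hφ_cont).tendsto x).mono_left
      nhdsWithin_le_nhds
  refine ge_of_tendsto hφ_tendsto ?_
  filter_upwards [Ioo_mem_nhdsGT hxμ] with c ⟨hxc, hcμ⟩
  exact minMaxVal_le_of_minMaxVal_lt (S : H₁ →ₗ[ℂ] H₀) hS hφ_mono hRφ
    (hx ▸ EReal.coe_lt_coe_iff.mpr hxc) fun v hv hv0 hSv => hcμ.le.trans (hker v hv hv0 hSv)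

/-- (Rubinstein–Schatzman comparison lemma, Lemma 7.1 of the paper.)
If `S` maps the form domain `D₁` into `D₀` continuously, `R₀(Su) ≤ φ(R₁(u))` whenever
`Su ≠ 0` for a nondecreasing `φ : ℝ → ℝ ∪ {+∞}` with `exp(−φ)` continuous, the `m`-th
min–max value `λ_m(R₁)` is finite, and `R₁ ≥ μ > λ_m(R₁)` on the nonzero kernel of `S`
in `D₁`, then `λ_m(R₀) ≤ φ(λ_m(R₁))`. -/
theorem stmt11 {H₀ H₁ : Type*}
    [NormedAddCommGroup H₀] [InnerProductSpace ℂ H₀] [CompleteSpace H₀]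
    [NormedAddCommGroup H₁] [InnerProductSpace ℂ H₁] [CompleteSpace H₁]
    (D₀ : Submodule ℂ H₀) (D₁ : Submodule ℂ H₁)
    (R₀ : H₀ → ℝ) (R₁ : H₁ → ℝ)
    (S : H₁ →L[ℂ] H₀) (hS : ∀ u ∈ D₁, S u ∈ D₀)
    (φ : ℝ → EReal) (hφ_mono : Monotone φ) (hφ_ne_bot : ∀ x, φ x ≠ ⊥)
    (hφ_cont : Continuous fun x : ℝ =>
      if φ x = ⊤ then (0 : ℝ) else Real.exp (-(φ x).toReal))
    (hRφ : ∀ u ∈ D₁, S u ≠ 0 → (R₀ (S u) : EReal) ≤ φ (R₁ u))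
    (m : ℕ) (hm : 1 ≤ m)
    (hfin_top : minMaxVal D₁ R₁ m ≠ ⊤) (hfin_bot : minMaxVal D₁ R₁ m ≠ ⊥)
    (μ : ℝ) (hμ : minMaxVal D₁ R₁ m < (μ : EReal))
    (hker : ∀ v ∈ D₁, v ≠ 0 → S v = 0 → μ ≤ R₁ v) :
    minMaxVal D₀ R₀ m ≤ φ ((minMaxVal D₁ R₁ m).toReal) :=
  stmt11_general D₀ D₁ R₀ R₁ S hS φ hφ_mono hφ_ne_bot hφ_cont hRφ m hfin_top hfin_bot μ hμ hker
end

section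
/- Let N ≥ 1 and k ≥ 1 be integers, and define the box Ω := ∏_{i=0}^{N−1} [0, k^{i/N}] ⊆ ℝ^N. Let σ : ℝ^N → ℝ^N be the linear isometry given by cyclically permuting the coordinates, (σx)_j = x_{(j+1) mod N}, and for m = 0,…,k−1 define the similarity T_m : ℝ^N → ℝ^N by T_m(x) := σ(k^{−1/N}·x) + m·k^{−1/N}·e_{N−1}, where e_{N−1} is the last standard basis vector. Then Ω = ⋃_{m=0}^{k−1} T_m(Ω), and the sets T_m(Ω) (m = 0,…,k−1) have pairwise disjoint interiors; in particular, k congruent copies of the scaled box k^{−1/N}·Ω exactly cover Ω. -/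
/-!
With `c = k^{-1/N}`, the map `T_m` sends `Ω` onto the slab of `Ω` on which the last coordinate
lies in `[m c, (m + 1) c]`: the cyclic shift moves the side `k^{(j+1)/N}` to position `j`, where
scaling by `c` turns it into `k^{j/N}`, while the unit side moves to the last position, becomes
`[0, c]` and is translated by `m c`. Since `k c = k^{(N-1)/N}`, these `k` slabs cut the last side
of `Ω` into consecutive intervals, so they cover `Ω` and their interiors are disjoint.
-/

open Set

/-- The box `Ω = ∏_{i=0}^{N−1} [0, k^{i/N}] ⊆ ℝ^N` with `N = n+1`. -/
noncomputable def tileBox (n k : ℕ) : Set (Fin (n + 1) → ℝ) :=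
  univ.pi fun j : Fin (n + 1) => Icc (0 : ℝ) ((k : ℝ) ^ (((j : ℕ) : ℝ) / ((n : ℝ) + 1)))

/-- The similarity `T_m(x) = σ(k^{−1/N}·x) + m·k^{−1/N}·e_{N−1}`, where `σ` cyclically
permutes the coordinates `(σx)_j = x_{(j+1) mod N}` and `e_{N−1}` is the last standard
basis vector (`N = n+1`). -/
noncomputable def tileMap (n k : ℕ) (m : Fin k) (x : Fin (n + 1) → ℝ) : Fin (n + 1) → ℝ :=
  fun j => (k : ℝ) ^ (-(1 : ℝ) / ((n : ℝ) + 1)) * x (j + 1) +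
    (if j = Fin.last n then ((m : ℕ) : ℝ) * (k : ℝ) ^ (-(1 : ℝ) / ((n : ℝ) + 1)) else 0)

theorem Monotone.iUnion_fin_Icc_map_succ {β : Type*} [LinearOrder β] {f : ℕ → β}
    (hf : Monotone f) {k : ℕ} (hk : k ≠ 0) :
    ⋃ i : Fin k, Icc (f i) (f (i + 1)) = Icc (f 0) (f k) := by
  refine subset_antisymm (iUnion_subset fun i => Icc_subset_Icc (hf i.val.zero_le) (hf i.isLt)) ?_
  rintro t ⟨h0, htk⟩
  rcases h0.eq_or_lt with rfl | h0
  · exact mem_iUnion.2 ⟨⟨0, Nat.pos_of_ne_zero hk⟩, left_mem_Icc.2 (hf (Nat.zero_le 1))⟩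
  · have ht : t ∈ Ioc (f 0) (f k) := ⟨h0, htk⟩
    rw [← hf.biUnion_Ico_Ioc_map_succ, mem_iUnion₂] at ht
    obtain ⟨i, hi, ht⟩ := ht
    exact mem_iUnion.2 ⟨⟨i, hi.2⟩, Ioc_subset_Icc_self ht⟩

theorem Set.iUnion_univ_pi_update {ι κ : Type*} {α : ι → Type*} [DecidableEq ι]
    (t : ∀ i, Set (α i)) (i : ι) (s : κ → Set (α i)) :
    ⋃ m, univ.pi (Function.update t i (s m)) = univ.pi (Function.update t i (⋃ m, s m)) := by
  simp only [univ_pi_update i t _ fun _ s => s, ← iUnion_inter]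
  congr 1
  ext
  simp

theorem Set.image_univ_pi_comp_equiv {ι ι' α β : Type*} (σ : ι' ≃ ι) (f : ι' → α → β)
    (t : ι → Set α) :
    (fun x j => f j (x (σ j))) '' univ.pi t = univ.pi fun j => f j '' t (σ j) := by
  have hperm : (fun x : ι → α => x ∘ σ) '' univ.pi t = univ.pi (t ∘ σ) := by
    ext y
    refine ⟨?_, fun hy => ⟨y ∘ σ.symm, fun i _ => by simpa using hy (σ.symm i) trivial, ?_⟩⟩
    · rintro ⟨x, hx, rfl⟩ j _
      exact hx (σ j) trivial
    · ext; simp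
  rw [show (fun x j => f j (x (σ j))) = Pi.map f ∘ (· ∘ σ) from rfl, image_comp, hperm,
    piMap_image_univ_pi]
  rfl

theorem Real.rpow_neg_one_div_mul_rpow_add_one_div {x : ℝ} (hx : 0 < x) (a : ℝ) {N : ℝ}
    (hN : N ≠ 0) : x ^ (-1 / N) * x ^ ((a + 1) / N) = x ^ (a / N) := by
  rw [← Real.rpow_add hx]
  congr 1
  field_simp
  ring

namespace Tiling

variable (n k : ℕ)

noncomputable def scale : ℝ := (k : ℝ) ^ (-(1 : ℝ) / ((n : ℝ) + 1))

noncomputable def side (j : Fin (n + 1)) : Set ℝ :=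
  Icc (0 : ℝ) ((k : ℝ) ^ (((j : ℕ) : ℝ) / ((n : ℝ) + 1)))

noncomputable def slab (m : Fin k) : Set (Fin (n + 1) → ℝ) :=
  univ.pi (Function.update (side n k) (Fin.last n)
    (Icc ((m : ℕ) * scale n k) (((m : ℕ) + 1) * scale n k)))

variable {n k}

theorem scale_pos (hk : 0 < k) : 0 < scale n k := by
  unfold scale; positivity

theorem monotone_natCast_mul_scale (hk : 0 < k) : Monotone fun i : ℕ => (i : ℝ) * scale n k :=
  Nat.mono_cast.mul_const (scale_pos hk).le

theorem natCast_mul_scale (hk : 0 < k) :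
    (k : ℝ) * scale n k = (k : ℝ) ^ (((Fin.last n : ℕ) : ℝ) / ((n : ℝ) + 1)) := by
  have h := Real.rpow_neg_one_div_mul_rpow_add_one_div (Nat.cast_pos.2 hk) n
    (N := (n : ℝ) + 1) (by positivity)
  rw [div_self (by positivity), Real.rpow_one] at h
  rw [Fin.val_last, ← h, scale, mul_comm]

theorem image_tileMap_tileBox (hk : 0 < k) (m : Fin k) :
    tileMap n k m '' tileBox n k = slab n k m := by
  refine (image_univ_pi_comp_equiv (Equiv.addRight 1) (fun j t => scale n k * t +
    if j = Fin.last n then ((m : ℕ) : ℝ) * scale n k else 0) (side n k)).trans (congrArg _ ?_)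
  funext j
  simp only [Equiv.coe_addRight, side, image_affine_Icc' (scale_pos hk)]
  by_cases hj : j = Fin.last n
  · subst hj
    simp only [Function.update_self, Fin.last_add_one, if_true, Fin.val_zero,
      Nat.cast_zero, zero_div, Real.rpow_zero, mul_zero, zero_add, mul_one]
    rw [add_one_mul, add_comm]
  · rw [Function.update_of_ne hj, if_neg hj, Fin.val_add_one, if_neg hj, mul_zero, add_zero,
      add_zero, Nat.cast_succ, scale,
      Real.rpow_neg_one_div_mul_rpow_add_one_div (Nat.cast_pos.2 hk)]
    · rfl
    · positivity

theorem iUnion_slab (hk : 0 < k) : ⋃ m, slab n k m = tileBox n k := by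
  simp only [slab]
  rw [iUnion_univ_pi_update]
  have := (monotone_natCast_mul_scale (n := n) hk).iUnion_fin_Icc_map_succ hk.ne'
  simp only [Nat.cast_add, Nat.cast_one, Nat.cast_zero, zero_mul] at this
  rw [this, natCast_mul_scale hk]
  exact congrArg _ (Function.update_eq_self _ _)

theorem disjoint_interior_slab (hk : 0 < k) {m m' : Fin k} (h : m ≠ m') :
    Disjoint (interior (slab n k m)) (interior (slab n k m')) := by
  rw [slab, slab, interior_pi_set finite_univ, interior_pi_set finite_univ, disjoint_univ_pi]
  refine ⟨Fin.last n, ?_⟩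
  simp only [Function.update_self, interior_Icc]
  simpa using
    (monotone_natCast_mul_scale hk).pairwise_disjoint_on_Ioo_succ (Fin.val_injective.ne h)

end Tiling

/-- (Tiling claim of Definition 2.2.) The box `Ω` with side lengths
`(1, k^{1/N}, …, k^{(N−1)/N})` is exactly covered by the `k` congruent copies
`T_m(Ω)` (`m = 0,…,k−1`) of the scaled box `k^{−1/N}·Ω`, and these copies have pairwise
disjoint interiors. -/
theorem stmt14 (n k : ℕ) (hk : 1 ≤ k) :
    (⋃ m : Fin k, tileMap n k m '' tileBox n k) = tileBox n k ∧
      ∀ m m' : Fin k, m ≠ m' →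
        Disjoint (interior (tileMap n k m '' tileBox n k))
          (interior (tileMap n k m' '' tileBox n k)) := by
  simp only [Tiling.image_tileMap_tileBox hk]
  exact ⟨Tiling.iUnion_slab hk, fun _ _ => Tiling.disjoint_interior_slab hk⟩
end
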